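/- Consider the inverse Riffle Shuffle Markov chain on permutations of N cards: at each step, every card independently receives a uniformly random bit, and all cards labeled 1 are moved to the top of the deck keeping their relative order. Let T be the first time at which the N sequences of bits assigned to the cards (one sequence per card, accumulated over the steps so far) are all distinct. Then T is a strong stationary time for this chain; in particular, the permutation of the deck at time T is distributed exactly uniformly on the symmetric group S_N. -/

import Mathlib

/-!
After `k` steps card `a` lies above card `b` iff at the last step where their bits differ `a` got
a `1` and `b` a `0`, or, if there is no such step, `a < b`. So the position of a card is its rank
for this order, and once the bit sequences of all cards are pairwise distinct the deck order
depends only on these sequences: relabelling the cards by a permutation `σ` composes the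
arrangement with `σ`. The event `T = k` is invariant under relabelling and the bits of the first
`k` steps are uniform, so on `{T = k}` every arrangement is produced by the same number of bit
patterns. Finally `T < ∞` almost surely, since two given cards agree for `j` steps with
probability `2⁻ʲ`.
-/

open MeasureTheory

/-- One run of the inverse Riffle Shuffle chain on `N` cards, driven by the bits `ξ`
(`ξ k c` is the bit assigned to card `c` at step `k`, steps `1, 2, …`):
`shuffleState N ξ k c` is the position of card `c` after `k` steps, starting from the
identity ordering. At each step every card receives a bit and all cards labeled `1` are
moved to the top of the deck keeping their relative order (cards labeled `0` stay below,
also keeping their relative order). -/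
def shuffleState (N : ℕ) (ξ : ℕ → ℕ → Bool) : ℕ → ℕ → ℕ
  | 0 => fun c => c
  | k + 1 => fun c =>
      if ξ (k + 1) c then
        ((Finset.range N).filter fun c' =>
          ξ (k + 1) c' = true ∧ shuffleState N ξ k c' < shuffleState N ξ k c).card
      else
        ((Finset.range N).filter fun c' => ξ (k + 1) c' = true).card +
          ((Finset.range N).filter fun c' =>
            ξ (k + 1) c' = false ∧ shuffleState N ξ k c' < shuffleState N ξ k c).card

open Finset
open scoped Classical ENNReal

theorem Finset.card_filter_fin_eq_card_filter_range (N : ℕ) (p : ℕ → Prop) [DecidablePred p] :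
    #{c : Fin N | p c} = #{c ∈ range N | p c} :=
  card_bij (fun c _ => c) (by simp) (fun _ _ _ _ => Fin.ext) fun b hb =>
    ⟨⟨b, mem_range.mp (mem_filter.mp hb).1⟩, by simpa using (mem_filter.mp hb).2, rfl⟩

section RankInStrictOrder

variable {α : Type*} {r : α → α → Prop} [DecidableRel r] {s : Finset α} {a b : α}

theorem Finset.card_filter_rel_lt_of_rel [IsStrictOrder α r] (ha : a ∈ s) (hab : r a b) :
    #{x ∈ s | r x a} < #{x ∈ s | r x b} := by
  refine card_lt_card ⟨fun x hx => ?_, fun hsub => ?_⟩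
  · simp only [mem_filter] at hx ⊢
    exact ⟨hx.1, _root_.trans hx.2 hab⟩
  · exact irrefl a (mem_filter.mp (hsub (mem_filter.mpr ⟨ha, hab⟩))).2

theorem Finset.card_filter_rel_lt_card [Std.Irrefl r] (ha : a ∈ s) :
    #{x ∈ s | r x a} < #s :=
  card_lt_card (filter_ssubset.mpr ⟨a, ha, irrefl a⟩)

theorem Finset.card_filter_rel_lt_iff [IsStrictTotalOrder α r] (ha : a ∈ s) (hb : b ∈ s) :
    #{x ∈ s | r x a} < #{x ∈ s | r x b} ↔ r a b := by
  refine ⟨fun h => ?_, card_filter_rel_lt_of_rel ha⟩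
  rcases trichotomous_of r a b with hab | rfl | hba
  · exact hab
  · exact absurd h (lt_irrefl _)
  · exact absurd (card_filter_rel_lt_of_rel hb hba) h.not_gt

theorem Finset.injOn_card_filter_rel [IsStrictTotalOrder α r] :
    Set.InjOn (fun a => #{x ∈ s | r x a}) s := by
  intro a ha b hb h
  refine Std.Trichotomous.trichotomous (r := r) a b (fun hab => ?_) (fun hba => ?_)
  · exact (card_filter_rel_lt_of_rel (s := s) ha hab).ne h
  · exact (card_filter_rel_lt_of_rel (s := s) hb hba).ne h.symm

end RankInStrictOrder

theorem Finset.card_filter_eq_factorial_mul_card_fiber {α β : Type*} [Fintype α] [DecidableEq α]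
    [Fintype β] {P : (α → β) → Prop} [DecidablePred P] {φ : (α → β) → Equiv.Perm α}
    (hP : ∀ (σ : Equiv.Perm α) f, P f → P (f ∘ σ))
    (hφ : ∀ (σ : Equiv.Perm α) f, P f → φ (f ∘ σ) = φ f * σ) (π : Equiv.Perm α) :
    #{f | P f} = (Fintype.card α).factorial * #{f | P f ∧ φ f = π} := by
  rw [card_eq_sum_card_fiberwise (f := φ) (t := univ) fun _ _ => mem_coe.mpr (mem_univ _),
    ← Fintype.card_perm, ← card_univ, ← smul_eq_mul, ← sum_const]
  refine sum_congr rfl fun π' _ => ?_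
  rw [filter_filter]
  refine card_nbij' (· ∘ ⇑(π'⁻¹ * π)) (· ∘ ⇑(π⁻¹ * π')) ?_ ?_ ?_ ?_ <;> intro f hf
  · simp only [mem_coe, mem_filter, mem_univ, true_and] at hf ⊢
    exact ⟨hP _ _ hf.1, by rw [hφ _ _ hf.1, hf.2, mul_inv_cancel_left]⟩
  · simp only [mem_coe, mem_filter, mem_univ, true_and] at hf ⊢
    exact ⟨hP _ _ hf.1, by rw [hφ _ _ hf.1, hf.2, mul_inv_cancel_left]⟩
  all_goals funext c; simp

theorem ENat.eq_coe_iff_of_le_coe_iff {t : ℕ∞} {p : ℕ → Prop} (h : ∀ k : ℕ, t ≤ k ↔ p k)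
    (k : ℕ) : t = k ↔ p k ∧ ∀ j < k, ¬ p j := by
  constructor
  · rintro rfl
    refine ⟨(h k).mp le_rfl, fun j hj hp => ?_⟩
    have := (h j).mpr hp
    norm_cast at this
    omega
  · rintro ⟨hk, hmin⟩
    have hle := (h k).mpr hk
    lift t to ℕ using ne_top_of_le_ne_top (ENat.natCast_ne_top k) hle
    norm_cast at hle ⊢
    by_contra hne
    exact hmin t (by omega) ((h t).mp le_rfl)

noncomputable def Set.BijOn.finPerm {N : ℕ} {s : ℕ → ℕ}
    (hs : Set.BijOn s (Set.Iio N) (Set.Iio N)) : Equiv.Perm (Fin N) :=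
  Equiv.ofBijective (fun c => ⟨s c, hs.mapsTo c.2⟩) (Finite.injective_iff_bijective.mp
    fun a b h => Fin.ext (hs.injOn a.2 b.2 (congrArg Fin.val h)))

@[simp]
theorem Set.BijOn.coe_finPerm_apply {N : ℕ} {s : ℕ → ℕ}
    (hs : Set.BijOn s (Set.Iio N) (Set.Iio N)) (c : Fin N) : (hs.finPerm c : ℕ) = s c :=
  rfl

namespace InverseRiffle

variable {N k : ℕ} {ζ ζ' : ℕ → ℕ → Bool}

/-- `Precedes ζ k a b`: after `k` steps driven by `ζ`, card `a` lies above card `b`. -/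
def Precedes (ζ : ℕ → ℕ → Bool) : ℕ → ℕ → ℕ → Prop
  | 0, a, b => a < b
  | k + 1, a, b => (ζ (k + 1) a = true ∧ ζ (k + 1) b = false) ∨
      (ζ (k + 1) a = ζ (k + 1) b ∧ Precedes ζ k a b)

instance : IsStrictTotalOrder ℕ (Precedes ζ k) where
  irrefl a := by
    induction k with
    | zero => exact lt_irrefl a
    | succ k ih => simpa [Precedes] using ih
  trans a b c := by
    induction k with
    | zero => exact lt_trans
    | succ k ih =>
      rintro (⟨ha, hb⟩ | ⟨hab, h⟩) (⟨hb', hc⟩ | ⟨hbc, h'⟩)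
      · simp_all
      · exact Or.inl ⟨ha, hbc ▸ hb⟩
      · exact Or.inl ⟨hab ▸ hb', hc⟩
      · exact Or.inr ⟨hab.trans hbc, ih h h'⟩
  trichotomous a b := by
    induction k with
    | zero => exact fun h h' => by simp only [Precedes] at h h'; omega
    | succ k ih =>
      intro h h'
      simp only [Precedes, not_or, not_and] at h h'
      apply ih <;> cases ha : ζ (k + 1) a <;> cases hb : ζ (k + 1) b <;> simp_all

theorem precedes_iff_of_exists_ne {a b a' b' : ℕ}
    (h : ∀ m, 1 ≤ m → m ≤ k → ζ' m a = ζ m a' ∧ ζ' m b = ζ m b')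
    (hne : ∃ m, 1 ≤ m ∧ m ≤ k ∧ ζ m a' ≠ ζ m b') :
    Precedes ζ' k a b ↔ Precedes ζ k a' b' := by
  induction k with
  | zero => omega
  | succ k ih =>
    obtain ⟨ha, hb⟩ := h (k + 1) (by omega) le_rfl
    simp only [Precedes, ha, hb]
    by_cases hlast : ζ (k + 1) a' = ζ (k + 1) b'
    · have hne' : ∃ m, 1 ≤ m ∧ m ≤ k ∧ ζ m a' ≠ ζ m b' := by
        obtain ⟨m, hm1, hm, hm'⟩ := hne
        exact ⟨m, hm1, by grind, hm'⟩
      rw [ih (fun m hm1 hm => h m hm1 (by omega)) hne']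
    · simp only [hlast, false_and, or_false]

theorem shuffleState_eq_card_precedes (k : ℕ) {c : ℕ} (hc : c < N) :
    shuffleState N ζ k c = #{c' ∈ range N | Precedes ζ k c' c} := by
  induction k generalizing c with
  | zero =>
    show c = _
    rw [← card_range c]
    congr 1
    ext
    simp [Precedes]
    omega
  | succ k ih =>
    have hlt : ∀ c' ∈ range N,
        shuffleState N ζ k c' < shuffleState N ζ k c ↔ Precedes ζ k c' c := fun c' hc' => by
      rw [ih (mem_range.mp hc'), ih hc]
      exact card_filter_rel_lt_iff (r := Precedes ζ k) hc' (mem_range.mpr hc)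
    simp only [shuffleState]
    cases hbit : ζ (k + 1) c
    · rw [if_neg (by simp), ← card_union_of_disjoint (disjoint_filter.mpr (by simp_all)),
        ← filter_or]
      refine congrArg card (filter_congr fun c' hc' => ?_)
      rw [hlt c' hc']
      cases h : ζ (k + 1) c' <;> simp [Precedes, hbit, h]
    · rw [if_pos rfl]
      refine congrArg card (filter_congr fun c' hc' => ?_)
      rw [hlt c' hc']
      cases h : ζ (k + 1) c' <;> simp [Precedes, hbit, h]

theorem shuffleState_lt (k : ℕ) {c : ℕ} (hc : c < N) : shuffleState N ζ k c < N := by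
  rw [shuffleState_eq_card_precedes k hc]
  simpa using card_filter_rel_lt_card (r := Precedes ζ k) (mem_range.mpr hc)

theorem injOn_shuffleState (k : ℕ) : Set.InjOn (shuffleState N ζ k) (Set.Iio N) := by
  intro a ha b hb h
  rw [shuffleState_eq_card_precedes k ha, shuffleState_eq_card_precedes k hb] at h
  exact injOn_card_filter_rel (r := Precedes ζ k) (by simpa using ha) (by simpa using hb) h

noncomputable def arrangement (N : ℕ) (ζ : ℕ → ℕ → Bool) (k : ℕ) : Equiv.Perm (Fin N) :=
  Equiv.ofBijective (fun c => ⟨shuffleState N ζ k c, shuffleState_lt k c.2⟩)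
    (Finite.injective_iff_bijective.mp fun a b h =>
      Fin.ext (injOn_shuffleState k a.2 b.2 (congrArg Fin.val h)))

@[simp]
theorem coe_arrangement_apply (c : Fin N) :
    (arrangement N ζ k c : ℕ) = shuffleState N ζ k c :=
  rfl

theorem arrangement_eq_finPerm_iff {s : ℕ → ℕ} (hs : Set.BijOn s (Set.Iio N) (Set.Iio N)) :
    arrangement N ζ k = hs.finPerm ↔ ∀ c < N, shuffleState N ζ k c = s c := by
  simp [Equiv.ext_iff, Fin.ext_iff, Fin.forall_iff]

def AgreeUpTo (N k : ℕ) (ζ ζ' : ℕ → ℕ → Bool) : Prop :=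
  ∀ m, 1 ≤ m → m ≤ k → ∀ c : Fin N, ζ m c = ζ' m c

theorem shuffleState_congr (h : AgreeUpTo N k ζ ζ') {c : ℕ} (hc : c < N) :
    shuffleState N ζ k c = shuffleState N ζ' k c := by
  induction k generalizing c with
  | zero => rfl
  | succ k ih =>
    have h' : AgreeUpTo N k ζ ζ' := fun m h1 h2 => h m h1 (by omega)
    have hbit : ∀ c' ∈ range N, ζ (k + 1) c' = ζ' (k + 1) c' := fun c' hc' =>
      h (k + 1) (by omega) le_rfl ⟨c', mem_range.mp hc'⟩
    simp only [shuffleState, hbit c (mem_range.mpr hc), ih h' hc]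
    split_ifs
    on_goal 2 => congr 1
    all_goals
      refine congrArg card (filter_congr fun c' hc' => ?_)
      simp only [hbit c' hc', ih h' (mem_range.mp hc')]

theorem arrangement_congr (h : AgreeUpTo N k ζ ζ') :
    arrangement N ζ k = arrangement N ζ' k :=
  Equiv.ext fun c => Fin.ext (shuffleState_congr h c.2)

def Separated (N : ℕ) (ζ : ℕ → ℕ → Bool) (k : ℕ) : Prop :=
  ∀ c₁ c₂ : Fin N, c₁ ≠ c₂ → ∃ m, 1 ≤ m ∧ m ≤ k ∧ ζ m c₁ ≠ ζ m c₂

def IsSeparationTime (N : ℕ) (ζ : ℕ → ℕ → Bool) (k : ℕ) : Prop :=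
  Separated N ζ k ∧ ∀ j < k, ¬ Separated N ζ j

theorem separated_iff :
    Separated N ζ k ↔ ∀ c₁ < N, ∀ c₂ < N, c₁ ≠ c₂ → ∃ m, 1 ≤ m ∧ m ≤ k ∧ ζ m c₁ ≠ ζ m c₂ :=
  ⟨fun h c₁ h₁ c₂ h₂ hne => h ⟨c₁, h₁⟩ ⟨c₂, h₂⟩ (by simpa [Fin.ext_iff] using hne),
    fun h c₁ c₂ hne => h c₁ c₁.2 c₂ c₂.2 (Fin.val_ne_of_ne hne)⟩

theorem exists_isSeparationTime {j : ℕ} (h : Separated N ζ j) : ∃ k, IsSeparationTime N ζ k :=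
  ⟨Nat.find ⟨j, h⟩, Nat.find_spec ⟨j, h⟩, fun _ hi => Nat.find_min ⟨j, h⟩ hi⟩

theorem isSeparationTime_unique {k' : ℕ} (h : IsSeparationTime N ζ k)
    (h' : IsSeparationTime N ζ k') : k = k' := by
  by_contra hne
  rcases Nat.lt_or_gt_of_ne hne with hlt | hlt
  · exact h'.2 k hlt h.1
  · exact h.2 k' hlt h'.1

def IsRelabeling (N k : ℕ) (σ : Equiv.Perm (Fin N)) (ζ' ζ : ℕ → ℕ → Bool) : Prop :=
  ∀ m, 1 ≤ m → m ≤ k → ∀ c : Fin N, ζ' m c = ζ m (σ c)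

section Relabeling

variable {σ : Equiv.Perm (Fin N)}

theorem separated_iff_of_isRelabeling (hσ : IsRelabeling N k σ ζ' ζ) {j : ℕ} (hj : j ≤ k) :
    Separated N ζ' j ↔ Separated N ζ j := by
  constructor
  · intro h c₁ c₂ hne
    obtain ⟨m, h1, h2, hm⟩ := h (σ.symm c₁) (σ.symm c₂) (σ.symm.injective.ne hne)
    refine ⟨m, h1, h2, ?_⟩
    simpa [hσ m h1 (h2.trans hj)] using hm
  · intro h c₁ c₂ hne
    obtain ⟨m, h1, h2, hm⟩ := h (σ c₁) (σ c₂) (σ.injective.ne hne)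
    exact ⟨m, h1, h2, by rwa [hσ m h1 (h2.trans hj), hσ m h1 (h2.trans hj)]⟩

theorem isSeparationTime_iff_of_isRelabeling (hσ : IsRelabeling N k σ ζ' ζ) :
    IsSeparationTime N ζ' k ↔ IsSeparationTime N ζ k :=
  and_congr (separated_iff_of_isRelabeling hσ le_rfl)
    (forall₂_congr fun _ hj => not_congr (separated_iff_of_isRelabeling hσ hj.le))

theorem arrangement_eq_mul_of_isRelabeling (hσ : IsRelabeling N k σ ζ' ζ)
    (hsep : Separated N ζ k) : arrangement N ζ' k = arrangement N ζ k * σ := by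
  ext c
  simp only [coe_arrangement_apply, Equiv.Perm.coe_mul, Function.comp_apply]
  rw [shuffleState_eq_card_precedes k c.2, shuffleState_eq_card_precedes k (σ c).2,
    ← card_filter_fin_eq_card_filter_range, ← card_filter_fin_eq_card_filter_range]
  refine card_equiv σ fun c' => ?_
  simp only [mem_filter, mem_univ, true_and]
  rcases eq_or_ne c' c with rfl | hne
  · simp only [irrefl]
  · exact precedes_iff_of_exists_ne (fun m h1 h2 => ⟨hσ m h1 h2 c', hσ m h1 h2 c⟩)
      (hsep _ _ (σ.injective.ne hne))

end Relabeling

theorem isSeparationTime_congr (h : AgreeUpTo N k ζ ζ') :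
    IsSeparationTime N ζ k ↔ IsSeparationTime N ζ' k :=
  isSeparationTime_iff_of_isRelabeling (σ := 1) h

theorem arrangement_eq_and_isSeparationTime_congr (π : Equiv.Perm (Fin N))
    (h : AgreeUpTo N k ζ ζ') :
    arrangement N ζ k = π ∧ IsSeparationTime N ζ k ↔
      arrangement N ζ' k = π ∧ IsSeparationTime N ζ' k := by
  rw [arrangement_congr h, isSeparationTime_congr h]

/-- `g c` lists the bits of card `c` at steps `1, …, k`; all other bits are set to `false`. -/
def ofPattern (g : Fin N → Fin k → Bool) : ℕ → ℕ → Bool := fun m c =>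
  if h : c < N ∧ 1 ≤ m ∧ m ≤ k then g ⟨c, h.1⟩ ⟨m - 1, by omega⟩ else false

def toPattern (N k : ℕ) (ζ : ℕ → ℕ → Bool) : Fin N → Fin k → Bool := fun c m => ζ (m + 1) c

theorem ofPattern_apply (g : Fin N → Fin k → Bool) {m : ℕ} (h1 : 1 ≤ m) (h2 : m ≤ k)
    (c : Fin N) : ofPattern g m c = g c ⟨m - 1, by omega⟩ := by
  simp [ofPattern, h1, h2]

theorem isRelabeling_ofPattern_comp (g : Fin N → Fin k → Bool) (σ : Equiv.Perm (Fin N)) :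
    IsRelabeling N k σ (ofPattern (g ∘ σ)) (ofPattern g) := by
  intro m h1 h2 c
  simp [ofPattern_apply _ h1 h2]

theorem toPattern_eq_iff {g : Fin N → Fin k → Bool} :
    toPattern N k ζ = g ↔ AgreeUpTo N k ζ (ofPattern g) := by
  refine ⟨?_, fun h => funext₂ fun c m => ?_⟩
  · rintro rfl m h1 h2 c
    rw [ofPattern_apply _ h1 h2]
    simp [toPattern, Nat.sub_add_cancel h1]
  · simpa [toPattern, ofPattern_apply _ (Nat.le_add_left 1 m) m.2] using
      h (m + 1) (by omega) m.2 c

theorem card_isSeparationTime_eq_factorial_mul (k : ℕ) (π : Equiv.Perm (Fin N)) :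
    #{g : Fin N → Fin k → Bool | IsSeparationTime N (ofPattern g) k} =
      N.factorial * #{g : Fin N → Fin k → Bool |
        IsSeparationTime N (ofPattern g) k ∧ arrangement N (ofPattern g) k = π} := by
  simpa using card_filter_eq_factorial_mul_card_fiber
    (fun σ g hg => (isSeparationTime_iff_of_isRelabeling (isRelabeling_ofPattern_comp g σ)).mpr hg)
    (fun σ g hg => arrangement_eq_mul_of_isRelabeling (isRelabeling_ofPattern_comp g σ) hg.1) π

section Measure

variable {Ω : Type*} {ξ : ℕ → ℕ → Ω → Bool}

theorem setOf_eq_preimage_toPattern {Q : (ℕ → ℕ → Bool) → Prop}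
    (hQ : ∀ ζ ζ', AgreeUpTo N k ζ ζ' → (Q ζ ↔ Q ζ')) :
    {ω | Q (fun m c => ξ m c ω)} =
      (fun ω => toPattern N k (fun m c => ξ m c ω)) ⁻¹' {g | Q (ofPattern g)} := by
  ext ω
  exact hQ _ _ (toPattern_eq_iff.mp rfl)

variable [MeasurableSpace Ω] {μ : Measure Ω}

def FairBits (μ : Measure Ω) (N : ℕ) (ξ : ℕ → ℕ → Ω → Bool) : Prop :=
  ∀ (F : Finset (ℕ × ℕ)) (f : ℕ → ℕ → Bool), (∀ p ∈ F, p.2 < N) →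
    μ {ω | ∀ p ∈ F, ξ p.1 p.2 ω = f p.1 p.2} = (1 / 2) ^ #F

theorem measurable_toPattern (hmeas : ∀ m c, Measurable (ξ m c)) :
    Measurable fun ω => toPattern N k (fun m c => ξ m c ω) :=
  measurable_pi_lambda _ fun _ => measurable_pi_lambda _ fun _ => hmeas _ _

theorem measure_toPattern_preimage_singleton (hiid : FairBits μ N ξ)
    (g : Fin N → Fin k → Bool) :
    μ ((fun ω => toPattern N k (fun m c => ξ m c ω)) ⁻¹' {g}) = (1 / 2) ^ (k * N) := by
  have hset : (fun ω => toPattern N k (fun m c => ξ m c ω)) ⁻¹' {g} =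
      {ω | ∀ p ∈ Icc 1 k ×ˢ range N, ξ p.1 p.2 ω = ofPattern g p.1 p.2} := by
    ext ω
    simp only [Set.mem_preimage, Set.mem_singleton_iff, toPattern_eq_iff, AgreeUpTo,
      Fin.forall_iff, mem_product, mem_Icc, mem_range, Prod.forall]
    grind
  rw [hset, hiid _ _ fun p hp => mem_range.mp (mem_product.mp hp).2, card_product,
    Nat.card_Icc, card_range, Nat.add_sub_cancel]

theorem measurableSet_setOf_of_agreeUpTo (hmeas : ∀ m c, Measurable (ξ m c))
    (Q : (ℕ → ℕ → Bool) → Prop) (hQ : ∀ ζ ζ', AgreeUpTo N k ζ ζ' → (Q ζ ↔ Q ζ')) :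
    MeasurableSet {ω | Q (fun m c => ξ m c ω)} := by
  rw [setOf_eq_preimage_toPattern hQ]
  exact measurable_toPattern hmeas (Set.toFinite _).measurableSet

theorem measure_setOf_eq_card_mul (hmeas : ∀ m c, Measurable (ξ m c)) (hiid : FairBits μ N ξ)
    (Q : (ℕ → ℕ → Bool) → Prop) (hQ : ∀ ζ ζ', AgreeUpTo N k ζ ζ' → (Q ζ ↔ Q ζ')) :
    μ {ω | Q (fun m c => ξ m c ω)} =
      #{g : Fin N → Fin k → Bool | Q (ofPattern g)} * (1 / 2) ^ (k * N) := by
  rw [setOf_eq_preimage_toPattern hQ, ← coe_filter_univ, ← sum_measure_preimage_singleton _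
    fun g _ => measurable_toPattern hmeas (measurableSet_singleton g)]
  simp [measure_toPattern_preimage_singleton hiid]

theorem measure_arrangement_eq_and_isSeparationTime (hmeas : ∀ m c, Measurable (ξ m c))
    (hiid : FairBits μ N ξ) (k : ℕ) (π : Equiv.Perm (Fin N)) :
    μ {ω | arrangement N (fun m c => ξ m c ω) k = π ∧
        IsSeparationTime N (fun m c => ξ m c ω) k} =
      (N.factorial : ℝ≥0∞)⁻¹ * μ {ω | IsSeparationTime N (fun m c => ξ m c ω) k} := by
  rw [measure_setOf_eq_card_mul hmeas hiid
      (fun ζ => arrangement N ζ k = π ∧ IsSeparationTime N ζ k)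
      fun _ _ => arrangement_eq_and_isSeparationTime_congr π,
    measure_setOf_eq_card_mul hmeas hiid _ fun _ _ => isSeparationTime_congr,
    card_isSeparationTime_eq_factorial_mul k π]
  simp only [and_comm, Nat.cast_mul, ← mul_assoc]
  rw [ENNReal.inv_mul_cancel (by exact_mod_cast N.factorial_ne_zero) (ENNReal.natCast_ne_top _),
    one_mul]

theorem measure_columns_agree_le (hiid : FairBits μ N ξ) {c₁ c₂ : ℕ} (h₁ : c₁ < N)
    (h₂ : c₂ < N) (hne : c₁ ≠ c₂) (j : ℕ) :
    μ {ω | ∀ m, 1 ≤ m → m ≤ j → ξ m c₁ ω = ξ m c₂ ω} ≤ (1 / 2) ^ j := by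
  set F := Icc 1 j ×ˢ ({c₁, c₂} : Finset ℕ)
  have hF : ∀ p ∈ F, p.2 < N := fun p hp => by
    rcases mem_insert.mp (mem_product.mp hp).2 with h | h <;> simp_all
  -- the common column of the two cards is the indicator of a subset `A` of the steps
  have hcover : {ω | ∀ m, 1 ≤ m → m ≤ j → ξ m c₁ ω = ξ m c₂ ω} ⊆
      ⋃ A ∈ (Icc 1 j).powerset, {ω | ∀ p ∈ F, ξ p.1 p.2 ω = decide (p.1 ∈ A)} := by
    intro ω hω
    simp only [Set.mem_iUnion]
    refine ⟨{m ∈ Icc 1 j | ξ m c₁ ω}, mem_powerset.mpr (filter_subset _ _), fun p hp => ?_⟩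
    simp only [F, mem_product, mem_Icc, mem_insert, mem_singleton] at hp
    obtain ⟨⟨h1, h2⟩, rfl | rfl⟩ := hp <;> simp [h1, h2, hω _ h1 h2]
  calc μ {ω | ∀ m, 1 ≤ m → m ≤ j → ξ m c₁ ω = ξ m c₂ ω}
      ≤ ∑ A ∈ (Icc 1 j).powerset, μ {ω | ∀ p ∈ F, ξ p.1 p.2 ω = decide (p.1 ∈ A)} :=
        (measure_mono hcover).trans (measure_biUnion_finset_le _ _)
    _ = 2 ^ j * ((1 / 2) ^ j * (1 / 2) ^ j) := by
        rw [sum_congr rfl fun A _ => hiid F (fun m _ => decide (m ∈ A)) hF, sum_const,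
          card_powerset, card_product, card_pair hne, Nat.card_Icc, nsmul_eq_mul]
        push_cast
        ring
    _ = (1 / 2) ^ j := by
        rw [← mul_assoc, ← mul_pow, one_div, ENNReal.mul_inv_cancel two_ne_zero
          ENNReal.ofNat_ne_top, one_pow, one_mul]

theorem measure_not_separated_le (hiid : FairBits μ N ξ) (j : ℕ) :
    μ {ω | ¬ Separated N (fun m c => ξ m c ω) j} ≤ #(range N).offDiag * (1 / 2) ^ j := by
  have hcover : {ω | ¬ Separated N (fun m c => ξ m c ω) j} ⊆
      ⋃ p ∈ (range N).offDiag, {ω | ∀ m, 1 ≤ m → m ≤ j → ξ m p.1 ω = ξ m p.2 ω} := by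
    intro ω hω
    simp only [Set.mem_ofPred_eq, separated_iff, not_forall, not_exists, not_and,
      not_not] at hω
    obtain ⟨c₁, h₁, c₂, h₂, hne, hagree⟩ := hω
    exact Set.mem_biUnion (x := (c₁, c₂))
      (mem_offDiag.mpr ⟨mem_range.mpr h₁, mem_range.mpr h₂, hne⟩) hagree
  calc μ {ω | ¬ Separated N (fun m c => ξ m c ω) j}
      ≤ ∑ p ∈ (range N).offDiag, μ {ω | ∀ m, 1 ≤ m → m ≤ j → ξ m p.1 ω = ξ m p.2 ω} :=
        (measure_mono hcover).trans (measure_biUnion_finset_le _ _)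
    _ ≤ ∑ _p ∈ (range N).offDiag, (1 / 2 : ℝ≥0∞) ^ j := sum_le_sum fun p hp => by
        obtain ⟨h₁, h₂, hne⟩ := mem_offDiag.mp hp
        exact measure_columns_agree_le hiid (mem_range.mp h₁) (mem_range.mp h₂) hne j
    _ = #(range N).offDiag * (1 / 2) ^ j := by rw [sum_const, nsmul_eq_mul]

theorem measure_forall_not_separated (hiid : FairBits μ N ξ) :
    μ {ω | ∀ j, ¬ Separated N (fun m c => ξ m c ω) j} = 0 := by
  have hlim : Filter.Tendsto (fun j : ℕ => (#(range N).offDiag : ℝ≥0∞) * (1 / 2) ^ j)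
      Filter.atTop (nhds 0) := by
    simpa only [mul_zero] using ENNReal.Tendsto.const_mul
      (ENNReal.tendsto_pow_atTop_nhds_zero_of_lt_one (r := 1 / 2) (by norm_num))
      (.inr (ENNReal.natCast_ne_top _))
  refine le_antisymm (ge_of_tendsto' hlim fun j => ?_) bot_le
  exact (measure_mono (Set.ofPred_subset_ofPred.mpr fun ω hω => hω j)).trans
    (measure_not_separated_le hiid j)

theorem measure_exists_isSeparationTime_and_arrangement_eq [IsProbabilityMeasure μ]
    (hmeas : ∀ m c, Measurable (ξ m c)) (hiid : FairBits μ N ξ) (π : Equiv.Perm (Fin N)) :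
    μ {ω | ∃ k, IsSeparationTime N (fun m c => ξ m c ω) k ∧
        arrangement N (fun m c => ξ m c ω) k = π} = (N.factorial : ℝ≥0∞)⁻¹ := by
  have hdisj : Pairwise (Function.onFun Disjoint fun k =>
      {ω | IsSeparationTime N (fun m c => ξ m c ω) k}) := fun i j hij =>
    Set.disjoint_left.mpr fun ω hi hj => hij (isSeparationTime_unique hi hj)
  have hsep : μ {ω | ∃ k, IsSeparationTime N (fun m c => ξ m c ω) k} = 1 := by
    rw [measure_congr (ae_eq_univ.mpr ?_), measure_univ]
    refine measure_mono_null ?_ (measure_forall_not_separated hiid)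
    exact fun ω hω j hj => hω (exists_isSeparationTime hj)
  calc μ {ω | ∃ k, IsSeparationTime N (fun m c => ξ m c ω) k ∧
        arrangement N (fun m c => ξ m c ω) k = π}
      = ∑' k, μ {ω | arrangement N (fun m c => ξ m c ω) k = π ∧
          IsSeparationTime N (fun m c => ξ m c ω) k} := by
        rw [← measure_iUnion (fun i j hij => Disjoint.mono (fun _ h => h.2) (fun _ h => h.2)
          (hdisj hij)) fun k => measurableSet_setOf_of_agreeUpTo hmeas
            (fun ζ => arrangement N ζ k = π ∧ IsSeparationTime N ζ k)
            fun _ _ => arrangement_eq_and_isSeparationTime_congr π]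
        simp only [Set.iUnion_ofPred, and_comm]
    _ = (N.factorial : ℝ≥0∞)⁻¹ * μ {ω | ∃ k, IsSeparationTime N (fun m c => ξ m c ω) k} := by
        simp only [measure_arrangement_eq_and_isSeparationTime hmeas hiid, ENNReal.tsum_mul_left]
        rw [← measure_iUnion hdisj fun k =>
          measurableSet_setOf_of_agreeUpTo hmeas _ fun _ _ => isSeparationTime_congr]
        simp only [Set.iUnion_ofPred]
    _ = (N.factorial : ℝ≥0∞)⁻¹ := by rw [hsep, mul_one]

end Measure

end InverseRiffle

open InverseRiffle

theorem inverse_riffle_shuffle_sst_general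
    {Ω : Type*} [MeasurableSpace Ω] (μ : Measure Ω) [IsProbabilityMeasure μ]
    (N : ℕ)
    (ξ : ℕ → ℕ → Ω → Bool) (hmeas : ∀ k c, Measurable (ξ k c))
    -- the bits are i.i.d. and fair
    (hiid : ∀ (F : Finset (ℕ × ℕ)) (f : ℕ → ℕ → Bool), (∀ p ∈ F, p.2 < N) →
      μ {ω | ∀ p ∈ F, ξ p.1 p.2 ω = f p.1 p.2} = (1 / 2 : ENNReal) ^ F.card)
    (T : Ω → ℕ∞)
    -- T is the first time at which the bit sequences of all N cards are distinct
    (hT : ∀ (ω : Ω) (k : ℕ), T ω ≤ (k : ℕ∞) ↔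
      ∀ c₁ < N, ∀ c₂ < N, c₁ ≠ c₂ → ∃ m, 1 ≤ m ∧ m ≤ k ∧ ξ m c₁ ω ≠ ξ m c₂ ω) :
    -- T is a strong stationary time
    (∀ (k : ℕ) (s : ℕ → ℕ), Set.BijOn s (Set.Iio N) (Set.Iio N) →
      μ {ω | (∀ c < N, shuffleState N (fun m c' => ξ m c' ω) k c = s c) ∧ T ω = (k : ℕ∞)}
        = ENNReal.ofReal (1 / (N.factorial : ℝ)) * μ {ω | T ω = (k : ℕ∞)}) ∧
    -- in particular, the ordering at time T is exactly uniform
    (∀ s : ℕ → ℕ, Set.BijOn s (Set.Iio N) (Set.Iio N) →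
      μ {ω | ∃ k : ℕ, T ω = (k : ℕ∞) ∧
          ∀ c < N, shuffleState N (fun m c' => ξ m c' ω) k c = s c}
        = ENNReal.ofReal (1 / (N.factorial : ℝ))) := by
  have hTk : ∀ ω (k : ℕ), T ω = k ↔ IsSeparationTime N (fun m c => ξ m c ω) k := fun ω =>
    ENat.eq_coe_iff_of_le_coe_iff fun k => (hT ω k).trans separated_iff.symm
  have hfact : ENNReal.ofReal (1 / (N.factorial : ℝ)) = (N.factorial : ℝ≥0∞)⁻¹ := by
    rw [one_div, ENNReal.ofReal_inv_of_pos (by positivity), ENNReal.ofReal_natCast]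
  refine ⟨fun k s hs => ?_, fun s hs => ?_⟩
  · simp_rw [hTk, ← arrangement_eq_finPerm_iff hs, hfact]
    exact measure_arrangement_eq_and_isSeparationTime hmeas hiid k hs.finPerm
  · simp_rw [hTk, ← arrangement_eq_finPerm_iff hs, hfact]
    exact measure_exists_isSeparationTime_and_arrangement_eq hmeas hiid hs.finPerm

/-- Consider the inverse Riffle Shuffle Markov chain on permutations of
`N` cards, driven by i.i.d. fair bits `ξ`. Let `T` be the first time at which the `N`
sequences of bits assigned to the cards are all distinct. Then `T` is a strong stationary
time for this chain: `P(X_k = s ∧ T = k) = (1/N!)·P(T = k)` for every ordering `s`; in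
particular, the permutation of the deck at time `T` is distributed exactly uniformly on
the symmetric group: `P(X_T = s) = 1/N!`. -/
theorem inverse_riffle_shuffle_sst
    {Ω : Type*} [MeasurableSpace Ω] (μ : Measure Ω) [IsProbabilityMeasure μ]
    (N : ℕ) (hN : 0 < N)
    (ξ : ℕ → ℕ → Ω → Bool) (hmeas : ∀ k c, Measurable (ξ k c))
    -- the bits are i.i.d. and fair
    (hiid : ∀ (F : Finset (ℕ × ℕ)) (f : ℕ → ℕ → Bool), (∀ p ∈ F, p.2 < N) →
      μ {ω | ∀ p ∈ F, ξ p.1 p.2 ω = f p.1 p.2} = (1 / 2 : ENNReal) ^ F.card)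
    (T : Ω → ℕ∞)
    -- T is the first time at which the bit sequences of all N cards are distinct
    (hT : ∀ (ω : Ω) (k : ℕ), T ω ≤ (k : ℕ∞) ↔
      ∀ c₁ < N, ∀ c₂ < N, c₁ ≠ c₂ → ∃ m, 1 ≤ m ∧ m ≤ k ∧ ξ m c₁ ω ≠ ξ m c₂ ω) :
    -- T is a strong stationary time
    (∀ (k : ℕ) (s : ℕ → ℕ), Set.BijOn s (Set.Iio N) (Set.Iio N) →
      μ {ω | (∀ c < N, shuffleState N (fun m c' => ξ m c' ω) k c = s c) ∧ T ω = (k : ℕ∞)}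
        = ENNReal.ofReal (1 / (N.factorial : ℝ)) * μ {ω | T ω = (k : ℕ∞)}) ∧
    -- in particular, the ordering at time T is exactly uniform
    (∀ s : ℕ → ℕ, Set.BijOn s (Set.Iio N) (Set.Iio N) →
      μ {ω | ∃ k : ℕ, T ω = (k : ℕ∞) ∧
          ∀ c < N, shuffleState N (fun m c' => ξ m c' ω) k c = s c}
        = ENNReal.ofReal (1 / (N.factorial : ℝ))) :=
  inverse_riffle_shuffle_sst_general μ N ξ hmeas hiid T hT
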